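/- arXiv:math/0701057 — 5 statements merged into one kernel-verified Lean document; each statement's English description precedes it below -/
import Mathlib

section
/- The quadratic Toda bracket π₂ on ℝ^{2N-1}, defined by {a_i,a_{i+1}} = (1/2)a_i a_{i+1}, {a_i,b_i} = -a_i b_i, {a_i,b_{i+1}} = a_i b_{i+1}, {b_i,b_{i+1}} = 2a_i², and all other coordinate brackets zero, satisfies the Jacobi identity. -/
/-!
Every coordinate bracket of `π₂` is a quadratic monomial `c · x_p · x_q` (for `{b_i, b_{i+1}}`
take `p = q = a_i`), so by the Leibniz rule the sum over `l` in each term of the Jacobiator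
collapses: `∑ l, π_{l i} ∂_l (c x_p x_q) = c (π_{p i} x_q + x_p π_{q i})`. The Jacobi identity
thereby becomes a polynomial identity among coordinate brackets whose shape depends only on which
of the indices involved are adjacent, and it is checked case by case.
-/

/-- Partial derivative of a function on `ι → ℝ` in the `i`-th coordinate direction. -/
noncomputable def pd {ι : Type*} [Fintype ι] [DecidableEq ι]
    (i : ι) (f : (ι → ℝ) → ℝ) (x : ι → ℝ) : ℝ :=
  fderiv ℝ f x (Pi.single i 1)

/-- Jacobi identity for a bracket given by a coefficient matrix `π`. -/
def JacobiId {ι : Type*} [Fintype ι] [DecidableEq ι]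
    (π : ι → ι → (ι → ℝ) → ℝ) : Prop :=
  ∀ (i j k : ι) (x : ι → ℝ),
    (∑ l, (π l i x * pd l (π j k) x + π l j x * pd l (π k i) x
        + π l k x * pd l (π i j) x)) = 0

/-- The quadratic Toda bracket π₂ on ℝ^{2N-1} (`M = N - 1`).
Nonzero coordinate brackets: {a_i, a_{i+1}} = (1/2) a_i a_{i+1},
{a_i, b_i} = -a_i b_i, {a_i, b_{i+1}} = a_i b_{i+1}, {b_i, b_{i+1}} = 2 a_i². -/
noncomputable def pi2 (M : ℕ) :
    (Fin M ⊕ Fin (M+1)) → (Fin M ⊕ Fin (M+1)) → ((Fin M ⊕ Fin (M+1)) → ℝ) → ℝ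
  | .inl i, .inl j => fun x =>
      if (i : ℕ) + 1 = (j : ℕ) then (1/2) * x (.inl i) * x (.inl j)
      else if (j : ℕ) + 1 = (i : ℕ) then -((1/2) * x (.inl j) * x (.inl i))
      else 0
  | .inl i, .inr j => fun x =>
      if j = i.castSucc then -(x (.inl i) * x (.inr j))
      else if j = i.succ then x (.inl i) * x (.inr j) else 0
  | .inr j, .inl i => fun x =>
      if j = i.castSucc then x (.inl i) * x (.inr j)
      else if j = i.succ then -(x (.inl i) * x (.inr j)) else 0
  | .inr i, .inr j => fun x =>
      if h : (i : ℕ) + 1 = (j : ℕ) then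
        2 * (x (.inl ⟨(i : ℕ), by have := j.isLt; omega⟩))^2
      else if h : (j : ℕ) + 1 = (i : ℕ) then
        -(2 * (x (.inl ⟨(j : ℕ), by have := i.isLt; omega⟩))^2)
      else 0

section QuadraticMonomial

variable {ι : Type*} [Fintype ι]

theorem sum_mul_pd_eq_fderiv [DecidableEq ι] (f : (ι → ℝ) → ℝ) (x v : ι → ℝ) :
    ∑ l, v l * pd l f x = fderiv ℝ f x v := by
  conv_rhs => rw [pi_eq_sum_univ' v]
  simp only [map_sum, map_smul, smul_eq_mul, pd]

theorem fderiv_const_mul_apply_mul_apply (c : ℝ) (p q : ι) (x v : ι → ℝ) :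
    fderiv ℝ (fun y : ι → ℝ => c * y p * y q) x v = c * (v p * x q + x p * v q) := by
  have hp := hasFDerivAt_apply (𝕜 := ℝ) (F' := fun _ : ι => ℝ) p x
  have hq := hasFDerivAt_apply (𝕜 := ℝ) (F' := fun _ : ι => ℝ) q x
  have h : HasFDerivAt (fun y : ι → ℝ => c * y p * y q) _ x := (hp.const_mul c).mul hq
  rw [h.fderiv]
  simp only [add_apply, smul_apply, ContinuousLinearMap.proj_apply, smul_eq_mul]
  ring

/-- `∑ l, π l i x * pd l (π j k) x` for a bracket whose entry `π j k` is the monomial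
`c * x p * x q` with `m j k = (c, p, q)`. -/
def jacobiTerm (π : ι → ι → (ι → ℝ) → ℝ) (m : ι → ι → ℝ × ι × ι) (i j k : ι) (x : ι → ℝ) : ℝ :=
  (m j k).1 * (π (m j k).2.1 i x * x (m j k).2.2 + x (m j k).2.1 * π (m j k).2.2 i x)

theorem jacobiId_iff_of_eq_monomial [DecidableEq ι] {π : ι → ι → (ι → ℝ) → ℝ}
    {m : ι → ι → ℝ × ι × ι} (hπ : ∀ i j x, π i j x = (m i j).1 * x (m i j).2.1 * x (m i j).2.2) :
    JacobiId π ↔ ∀ i j k x,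
      jacobiTerm π m i j k x + jacobiTerm π m j k i x + jacobiTerm π m k i j x = 0 := by
  have hsum : ∀ i j k x, ∑ l, π l i x * pd l (π j k) x = jacobiTerm π m i j k x := by
    intro i j k x
    rw [sum_mul_pd_eq_fderiv, show π j k = _ from funext (hπ j k),
      fderiv_const_mul_apply_mul_apply]
    rfl
  simp only [JacobiId, Finset.sum_add_distrib, hsum]

end QuadraticMonomial

noncomputable def pi2Monomial (M : ℕ) :
    (Fin M ⊕ Fin (M+1)) → (Fin M ⊕ Fin (M+1)) → ℝ × (Fin M ⊕ Fin (M+1)) × (Fin M ⊕ Fin (M+1))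
  | .inl i, .inl j =>
      (if (i : ℕ) + 1 = j then 1/2 else if (j : ℕ) + 1 = i then -(1/2) else 0, .inl i, .inl j)
  | .inl i, .inr j => (if j = i.castSucc then -1 else if j = i.succ then 1 else 0, .inl i, .inr j)
  | .inr j, .inl i => (if j = i.castSucc then 1 else if j = i.succ then -1 else 0, .inl i, .inr j)
  | .inr i, .inr j =>
      if h : (i : ℕ) + 1 = j then (2, .inl ⟨i, by omega⟩, .inl ⟨i, by omega⟩)
      else if h : (j : ℕ) + 1 = i then (-2, .inl ⟨j, by omega⟩, .inl ⟨j, by omega⟩)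
      else (0, .inr i, .inr j)

theorem pi2_eq_monomial (M : ℕ) (u v : Fin M ⊕ Fin (M+1)) (x : Fin M ⊕ Fin (M+1) → ℝ) :
    pi2 M u v x =
      (pi2Monomial M u v).1 * x (pi2Monomial M u v).2.1 * x (pi2Monomial M u v).2.2 := by
  rcases u with i | i <;> rcases v with j | j <;> simp only [pi2, pi2Monomial] <;>
    split_ifs <;> ring

/- Destructuring the `Fin` indices makes every adjacency condition an equation of natural numbers,
so after the two rounds of `split_ifs` (on `pi2Monomial`, then on the brackets `pi2 M p u` of the
factors it produces) each branch is refuted by `omega` or is a ring identity after `subst`. -/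
set_option maxHeartbeats 400000 in
theorem jacobiTerm_pi2_cyclic_sum (M : ℕ) (u v w : Fin M ⊕ Fin (M+1))
    (x : Fin M ⊕ Fin (M+1) → ℝ) :
    jacobiTerm (pi2 M) (pi2Monomial M) u v w x + jacobiTerm (pi2 M) (pi2Monomial M) v w u x
      + jacobiTerm (pi2 M) (pi2Monomial M) w u v x = 0 := by
  rcases u with ⟨i, hi⟩ | ⟨i, hi⟩ <;> rcases v with ⟨j, hj⟩ | ⟨j, hj⟩ <;>
    rcases w with ⟨k, hk⟩ | ⟨k, hk⟩ <;>
    simp only [jacobiTerm, pi2Monomial, Fin.castSucc_mk, Fin.succ_mk, Fin.mk.injEq] <;>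
    split_ifs <;>
    simp only [pi2, Fin.castSucc_mk, Fin.succ_mk, Fin.mk.injEq] <;>
    split_ifs <;>
    first | (exfalso; omega) | (subst_vars; ring1)

/-- The quadratic Toda bracket satisfies the Jacobi identity. -/
theorem pi2_jacobi (M : ℕ) : JacobiId (pi2 M) :=
  (jacobiId_iff_of_eq_monomial (pi2_eq_monomial M)).2 (jacobiTerm_pi2_cyclic_sum M)
end

section
/- The linear and quadratic Toda brackets π₁ and π₂ are compatible: π₁ + π₂ also satisfies the Jacobi identity (equivalently, the Schouten bracket [π₁,π₂] vanishes). -/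
/-- The linear Toda bracket π₁ on ℝ^{2N-1}; here `M = N - 1`, the `a`-coordinates
are indexed by `Fin M` (`Sum.inl`) and the `b`-coordinates by `Fin (M+1)` (`Sum.inr`).
Nonzero coordinate brackets: {a_i, b_i} = -a_i, {a_i, b_{i+1}} = a_i. -/
noncomputable def pi1 (M : ℕ) :
    (Fin M ⊕ Fin (M+1)) → (Fin M ⊕ Fin (M+1)) → ((Fin M ⊕ Fin (M+1)) → ℝ) → ℝ
  | .inl i, .inr j => fun x =>
      if j = i.castSucc then -(x (.inl i)) else if j = i.succ then x (.inl i) else 0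
  | .inr j, .inl i => fun x =>
      if j = i.castSucc then x (.inl i) else if j = i.succ then -(x (.inl i)) else 0
  | .inl _, .inl _ => fun _ => 0
  | .inr _, .inr _ => fun _ => 0

/-!
π₁ + π₂ is antisymmetric, so its Jacobiator is alternating and it suffices to check it on triples
of coordinates that increase in the order a₀ < ⋯ < a_{M-1} < b₀ < ⋯ < b_M. As π₁ is linear and
π₂ is quadratic, the derivative of a coefficient of π₁ + π₂ in direction v is π₁(v) plus the
polarisation of π₂ at (x, v). On a sorted triple most brackets vanish, and what is left is a
polynomial identity, once the cases of adjacent indices are separated.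
-/

section Bracket

variable {ι : Type*}

theorem fderiv_coord_apply (m : ι) (x v : ι → ℝ) :
    fderiv ℝ (fun y : ι → ℝ => y m) x v = v m := by
  rw [(hasFDerivAt_apply m x).fderiv]
  rfl

theorem sum_mul_pd [Fintype ι] [DecidableEq ι] (f : (ι → ℝ) → ℝ) (x v : ι → ℝ) :
    ∑ l, v l * pd l f x = fderiv ℝ f x v := by
  conv_rhs => rw [pi_eq_sum_univ' v]
  simp [pd, map_sum, map_smul]

noncomputable def jacobiator (π : ι → ι → (ι → ℝ) → ℝ) (i j k : ι) (x : ι → ℝ) : ℝ :=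
  fderiv ℝ (π j k) x (fun l => π l i x) + fderiv ℝ (π k i) x (fun l => π l j x)
    + fderiv ℝ (π i j) x (fun l => π l k x)

variable {π : ι → ι → (ι → ℝ) → ℝ}

theorem jacobiId_iff_jacobiator_eq_zero [Fintype ι] [DecidableEq ι] :
    JacobiId π ↔ ∀ i j k x, jacobiator π i j k x = 0 := by
  simp only [JacobiId, jacobiator, Finset.sum_add_distrib, sum_mul_pd]

theorem jacobiator_rotate (i j k : ι) (x : ι → ℝ) :
    jacobiator π i j k x = jacobiator π j k i x := by
  simp only [jacobiator]
  ring

theorem jacobiator_swap [Fintype ι] (hπ : ∀ i j, π j i = -π i j) (i j k : ι) (x : ι → ℝ) :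
    jacobiator π j i k x = -jacobiator π i j k x := by
  simp only [jacobiator, hπ i k, hπ j k, hπ i j, fderiv_neg, neg_apply]
  ring

theorem jacobiator_self [Fintype ι] (hπ : ∀ i j, π j i = -π i j) (i k : ι) (x : ι → ℝ) :
    jacobiator π i i k x = 0 := by
  linarith [jacobiator_swap hπ i i k x]

theorem jacobiId_of_jacobiator_eq_zero_of_lt [Fintype ι] [DecidableEq ι]
    {α : Type*} [LinearOrder α] {key : ι → α} (hkey : Function.Injective key)
    (hπ : ∀ i j, π j i = -π i j)
    (h : ∀ i j k x, key i < key j → key j < key k → jacobiator π i j k x = 0) :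
    JacobiId π := by
  rw [jacobiId_iff_jacobiator_eq_zero]
  intro i j k x
  wlog hij : key i < key j generalizing i j
  · rcases (not_lt.mp hij).eq_or_lt with hji | hji
    · rw [hkey hji, jacobiator_self hπ]
    · rw [← neg_eq_zero, ← jacobiator_swap hπ, this j i hji]
  rcases lt_trichotomy (key j) (key k) with hjk | hjk | hkj
  · exact h i j k x hij hjk
  · rw [hkey hjk, jacobiator_rotate, jacobiator_self hπ]
  · rcases lt_trichotomy (key i) (key k) with hik | hik | hki
    · rw [jacobiator_rotate, ← neg_eq_zero, ← jacobiator_swap hπ, ← jacobiator_rotate]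
      exact h i k j x hik hkj
    · rw [hkey hik, jacobiator_rotate, jacobiator_rotate, jacobiator_self hπ]
    · rw [jacobiator_rotate, jacobiator_rotate]
      exact h k i j x hki hij

end Bracket

section Toda

variable {M : ℕ}

theorem differentiable_pi1 (i j : Fin M ⊕ Fin (M+1)) : Differentiable ℝ (pi1 M i j) := by
  rcases i with i | i <;> rcases j with j | j <;> simp only [pi1] <;> (try split_ifs) <;> fun_prop

theorem differentiable_pi2 (i j : Fin M ⊕ Fin (M+1)) : Differentiable ℝ (pi2 M i j) := by
  rcases i with i | i <;> rcases j with j | j <;> simp only [pi2] <;> (try split_ifs) <;> fun_prop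

theorem fderiv_pi1 (i j : Fin M ⊕ Fin (M+1)) (x v : Fin M ⊕ Fin (M+1) → ℝ) :
    fderiv ℝ (pi1 M i j) x v = pi1 M i j v := by
  rcases i with i | i <;> rcases j with j | j <;> simp only [pi1] <;> (try split_ifs) <;>
    simp (disch := fun_prop) [fderiv_fun_neg, fderiv_coord_apply]

theorem fderiv_pi2 (i j : Fin M ⊕ Fin (M+1)) (x v : Fin M ⊕ Fin (M+1) → ℝ) :
    fderiv ℝ (pi2 M i j) x v = pi2 M i j (x + v) - pi2 M i j x - pi2 M i j v := by
  rcases i with i | i <;> rcases j with j | j <;> simp only [pi2] <;> (try split_ifs) <;>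
    simp (disch := fun_prop) [fderiv_fun_neg, fderiv_fun_mul, fderiv_fun_pow,
      fderiv_coord_apply] <;> ring

theorem fderiv_pi1_add_pi2 (i j : Fin M ⊕ Fin (M+1)) (x v : Fin M ⊕ Fin (M+1) → ℝ) :
    fderiv ℝ (fun y => pi1 M i j y + pi2 M i j y) x v
      = pi1 M i j v + (pi2 M i j (x + v) - pi2 M i j x - pi2 M i j v) := by
  rw [fderiv_fun_add (differentiable_pi1 i j x) (differentiable_pi2 i j x), add_apply,
    fderiv_pi1, fderiv_pi2]

theorem pi1_swap (i j : Fin M ⊕ Fin (M+1)) : pi1 M j i = -pi1 M i j := by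
  funext x
  rcases i with i | i <;> rcases j with j | j <;> simp only [pi1, Pi.neg_apply] <;>
    (try split_ifs) <;> ring

theorem pi2_swap (i j : Fin M ⊕ Fin (M+1)) : pi2 M j i = -pi2 M i j := by
  funext x
  rcases i with i | i <;> rcases j with j | j <;> simp only [pi2, Pi.neg_apply] <;>
    (try split_ifs) <;> first | (exfalso; omega) | ring

theorem pi1_add_pi2_swap (i j : Fin M ⊕ Fin (M+1)) :
    (fun x => pi1 M j i x + pi2 M j i x) = -fun x => pi1 M i j x + pi2 M i j x := by
  rw [pi1_swap, pi2_swap]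
  funext x
  simp only [Pi.neg_apply, neg_add]

def todaIndex (M : ℕ) : Fin M ⊕ Fin (M+1) → ℕ := Sum.elim (↑) (M + ↑·)

theorem todaIndex_injective (M : ℕ) : Function.Injective (todaIndex M) := by
  rintro (i | i) (j | j) h <;>
    simp only [todaIndex, Sum.elim_inl, Sum.elim_inr, Sum.inl.injEq, Sum.inr.injEq, reduceCtorEq,
      Fin.ext_iff] at h ⊢ <;>
    omega

theorem exists_nat_coords (x : Fin M ⊕ Fin (M+1) → ℝ) :
    ∃ A B : ℕ → ℝ, (∀ m, x (.inl m) = A m) ∧ (∀ m, x (.inr m) = B m) :=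
  ⟨fun n => if h : n < M then x (.inl ⟨n, h⟩) else 0,
    fun n => if h : n < M + 1 then x (.inr ⟨n, h⟩) else 0,
    fun m => by simp only [dif_pos m.isLt], fun m => by simp only [dif_pos m.isLt]⟩

theorem jacobiator_pi1_add_pi2_eq_zero (i j k : Fin M ⊕ Fin (M+1)) (x : Fin M ⊕ Fin (M+1) → ℝ)
    (hij : todaIndex M i < todaIndex M j) (hjk : todaIndex M j < todaIndex M k) :
    jacobiator (fun i j x => pi1 M i j x + pi2 M i j x) i j k x = 0 := by
  -- Coordinates read through ℕ-indexed sequences, so that `subst_vars` can identify those whose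
  -- indices agree as natural numbers.
  obtain ⟨A, B, hA, hB⟩ := exists_nat_coords x
  simp only [jacobiator, fderiv_pi1_add_pi2]
  rcases i with i | i <;> rcases j with j | j <;> rcases k with k | k <;>
  simp only [todaIndex, Sum.elim_inl, Sum.elim_inr] at hij hjk <;>
  simp only [pi1, pi2, Pi.add_apply, hA, hB, Fin.ext_iff, Fin.val_castSucc, Fin.val_succ,
    dite_eq_ite] <;>
  -- the ordering decides every condition except the adjacency of two indices
  simp (disch := omega) only [if_neg] <;>
  generalize (i : ℕ) = p at * <;>
  generalize (j : ℕ) = q at * <;>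
  generalize (k : ℕ) = r at * <;>
  (try split_ifs) <;> first | (exfalso; omega) | (subst_vars; ring)

end Toda

/-- The linear and quadratic Toda brackets are compatible: their sum
also satisfies the Jacobi identity. -/
theorem pi1_pi2_compatible (M : ℕ) :
    JacobiId (fun i j x => pi1 M i j x + pi2 M i j x) :=
  jacobiId_of_jacobiator_eq_zero_of_lt (todaIndex_injective M) pi1_add_pi2_swap
    jacobiator_pi1_add_pi2_eq_zero
end

section
/- The function det L, where L is the N×N tridiagonal Jacobi matrix with diagonal entries b₁,…,b_N and off-diagonal entries a₁,…,a_{N-1} (symmetric), is a Casimir of the quadratic Toda bracket π₂, i.e., {det L, f}_{π₂} = 0 for all smooth f on ℝ^{2N-1} (for small N, e.g., N = 2 or N = 3, this can be verified explicitly). -/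
/-- The Poisson bracket of two functions induced by a coefficient matrix `π`:
{f,g}(x) = Σ_{i,j} π_{ij}(x) ∂f/∂x_i ∂g/∂x_j. -/
noncomputable def pbracket {ι : Type*} [Fintype ι] [DecidableEq ι]
    (π : ι → ι → (ι → ℝ) → ℝ) (f g : (ι → ℝ) → ℝ) (x : ι → ℝ) : ℝ :=
  ∑ i, ∑ j, π i j x * pd i f x * pd j g x

/-- The symmetric tridiagonal Jacobi matrix `L` with diagonal entries `b_i`
and off-diagonal entries `a_i`, as a function of the coordinates. -/
noncomputable def jacobiL (M : ℕ) (x : (Fin M ⊕ Fin (M+1)) → ℝ) :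
    Matrix (Fin (M+1)) (Fin (M+1)) ℝ :=
  fun i j =>
    if i = j then x (.inr i)
    else if h : (i : ℕ) + 1 = (j : ℕ) then x (.inl ⟨(i : ℕ), by have := j.isLt; omega⟩)
    else if h : (j : ℕ) + 1 = (i : ℕ) then x (.inl ⟨(j : ℕ), by have := i.isLt; omega⟩)
    else 0


open Matrix

lemma pd_of_hasDerivAt {ι : Type*} [Fintype ι] [DecidableEq ι]
    {f : (ι → ℝ) → ℝ} {x : ι → ℝ} (hf : DifferentiableAt ℝ f x) (i : ι) {c : ℝ}
    (h : HasDerivAt (fun t : ℝ => f (x + t • (Pi.single i 1 : ι → ℝ))) c 0) :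
    pd i f x = c := by
  have hcurve : HasDerivAt (fun t : ℝ => x + t • (Pi.single i 1 : ι → ℝ))
      (Pi.single i 1 : ι → ℝ) 0 := by
    simpa using ((hasDerivAt_id (0:ℝ)).smul_const (Pi.single i 1 : ι → ℝ)).const_add x
  have h0 : x + (0:ℝ) • (Pi.single i 1 : ι → ℝ) = x := by simp
  have hf' : HasFDerivAt f (fderiv ℝ f x) (x + (0:ℝ) • (Pi.single i 1 : ι → ℝ)) := by
    rw [h0]; exact hf.hasFDerivAt
  have h2 : HasDerivAt (fun t : ℝ => f (x + t • (Pi.single i 1 : ι → ℝ)))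
      (fderiv ℝ f x (Pi.single i 1)) 0 := by
    exact hf'.comp_hasDerivAt 0 hcurve
  exact h2.unique h

lemma updateRow_comm {n m : Type*} [DecidableEq m] (A : Matrix m n ℝ) {i j : m}
    (hij : i ≠ j) (u v : n → ℝ) :
    (A.updateRow i u).updateRow j v = (A.updateRow j v).updateRow i u := by
  ext p q
  simp only [Matrix.updateRow_apply]
  split_ifs with h1 h2 h2 <;> simp_all

lemma jacobiL_add_inr (M : ℕ) (x : (Fin M ⊕ Fin (M+1)) → ℝ) (k : Fin (M+1)) (t : ℝ) :
    jacobiL M (x + t • (Pi.single (Sum.inr k) 1 : (Fin M ⊕ Fin (M+1)) → ℝ)) =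
      (jacobiL M x).updateRow k (jacobiL M x k + t • (Pi.single k 1 : Fin (M+1) → ℝ)) := by
  ext p q
  simp only [Matrix.updateRow_apply, jacobiL, Pi.add_apply, Pi.smul_apply, smul_eq_mul,
    Pi.single_apply]
  split_ifs <;>
      solve
        | rfl
        | omega
        | (subst_vars; simp_all)
        | simp_all
        | (simp_all [Fin.ext_iff, Fin.val_succ, Fin.coe_castSucc])
        | (exfalso; simp only [Fin.ext_iff, Fin.val_succ, Fin.coe_castSucc, Sum.inl.injEq, Sum.inr.injEq, Fin.val_mk] at *; omega)

lemma jacobiL_add_inl (M : ℕ) (x : (Fin M ⊕ Fin (M+1)) → ℝ) (k : Fin M) (t : ℝ) :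
    jacobiL M (x + t • (Pi.single (Sum.inl k) 1 : (Fin M ⊕ Fin (M+1)) → ℝ)) =
      ((jacobiL M x).updateRow k.castSucc
          (jacobiL M x k.castSucc + t • (Pi.single k.succ 1 : Fin (M+1) → ℝ))).updateRow k.succ
        (jacobiL M x k.succ + t • (Pi.single k.castSucc 1 : Fin (M+1) → ℝ)) := by
  ext p q
  simp only [Matrix.updateRow_apply, jacobiL, Pi.add_apply, Pi.smul_apply, smul_eq_mul,
    Pi.single_apply]
  split_ifs <;>
      solve
        | rfl
        | omega
        | (subst_vars; simp_all)
        | simp_all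
        | (simp_all [Fin.ext_iff, Fin.val_succ, Fin.coe_castSucc])
        | (exfalso; simp only [Fin.ext_iff, Fin.val_succ, Fin.coe_castSucc, Sum.inl.injEq, Sum.inr.injEq, Fin.val_mk] at *; omega)

lemma sum_single_support {n c : ℕ} (F : Fin n → ℝ)
    (h0 : ∀ k : Fin n, (k : ℕ) ≠ c → F k = 0) :
    ∑ k, F k = if h : c < n then F ⟨c, h⟩ else 0 := by
  split_ifs with h
  · exact Finset.sum_eq_single ⟨c, h⟩ (fun k _ hk => h0 k (by simpa [Fin.ext_iff] using hk))
      (fun hn => absurd (Finset.mem_univ _) hn)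
  · exact Finset.sum_eq_zero fun k _ => h0 k (by have := k.isLt; omega)

lemma sum_succ_support {n c : ℕ} (F : Fin n → ℝ)
    (h0 : ∀ k : Fin n, (k : ℕ) + 1 ≠ c → F k = 0) :
    ∑ k, F k = if h : 0 < c ∧ c - 1 < n then F ⟨c - 1, h.2⟩ else 0 := by
  rcases Nat.eq_zero_or_pos c with hc | hc
  · subst hc
    simp only [Nat.lt_irrefl, false_and, dif_neg, not_false_iff]
    exact Finset.sum_eq_zero fun k _ => h0 k (by omega)
  · rw [sum_single_support F (c := c - 1) (fun k hk => h0 k (by omega))]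
    split_ifs with h1 h2 h2 <;> first | rfl | omega

lemma jacobiL_entry_differentiable (M : ℕ) (p q : Fin (M+1))
    (x : (Fin M ⊕ Fin (M+1)) → ℝ) :
    DifferentiableAt ℝ (fun y => jacobiL M y p q) x := by
  unfold jacobiL
  split_ifs <;>
    first
      | exact differentiableAt_const _
      | exact (ContinuousLinearMap.proj _ : ((Fin M ⊕ Fin (M+1)) → ℝ) →L[ℝ] ℝ).differentiableAt

lemma detL_differentiable (M : ℕ) (x : (Fin M ⊕ Fin (M+1)) → ℝ) :
    DifferentiableAt ℝ (fun y => (jacobiL M y).det) x := by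
  simp only [Matrix.det_apply', zsmul_eq_mul]
  apply DifferentiableAt.fun_sum
  intro σ _
  apply DifferentiableAt.const_mul
  exact (HasFDerivAt.finset_prod (u := Finset.univ)
    (g := fun i y => jacobiL M y (σ i) i)
    (fun i _ => (jacobiL_entry_differentiable M (σ i) i x).hasFDerivAt)).differentiableAt


lemma jacobiL_transpose (M : ℕ) (x : (Fin M ⊕ Fin (M+1)) → ℝ) :
    (jacobiL M x)ᵀ = jacobiL M x := by
  ext p q
  rcases eq_or_ne p q with rfl | hpq
  · simp [jacobiL]
  · simp only [Matrix.transpose_apply, jacobiL, if_neg hpq, if_neg (Ne.symm hpq)]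
    split_ifs <;> first | rfl | omega

lemma jacobiL_adj_symm (M : ℕ) (x : (Fin M ⊕ Fin (M+1)) → ℝ) (p q : Fin (M+1)) :
    (jacobiL M x).adjugate q p = (jacobiL M x).adjugate p q := by
  calc (jacobiL M x).adjugate q p = ((jacobiL M x).adjugate)ᵀ p q := rfl
    _ = ((jacobiL M x)ᵀ).adjugate p q := by rw [Matrix.adjugate_transpose]
    _ = (jacobiL M x).adjugate p q := by rw [jacobiL_transpose]

lemma pd_detL_inr (M : ℕ) (x : (Fin M ⊕ Fin (M+1)) → ℝ) (k : Fin (M+1)) :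
    pd (Sum.inr k) (fun y => (jacobiL M y).det) x = (jacobiL M x).adjugate k k := by
  apply pd_of_hasDerivAt (detL_differentiable M x)
  have key : ∀ t : ℝ,
      (jacobiL M (x + t • (Pi.single (Sum.inr k) 1 : (Fin M ⊕ Fin (M+1)) → ℝ))).det
        = (jacobiL M x).det + t * (jacobiL M x).adjugate k k := by
    intro t
    rw [jacobiL_add_inr, Matrix.det_updateRow_add, Matrix.updateRow_eq_self,
      Matrix.det_updateRow_smul, ← Matrix.adjugate_apply]
  simp only [key]
  simpa using
    ((hasDerivAt_id (0:ℝ)).mul_const ((jacobiL M x).adjugate k k)).const_add ((jacobiL M x).det)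

lemma pd_detL_inl (M : ℕ) (x : (Fin M ⊕ Fin (M+1)) → ℝ) (k : Fin M) :
    pd (Sum.inl k) (fun y => (jacobiL M y).det) x =
      2 * (jacobiL M x).adjugate k.castSucc k.succ := by
  apply pd_of_hasDerivAt (detL_differentiable M x)
  set A := jacobiL M x with hA
  have hne : k.castSucc ≠ k.succ := (Fin.castSucc_lt_succ : k.castSucc < k.succ).ne
  set c2 : ℝ :=
    ((A.updateRow k.succ (Pi.single k.castSucc 1)).updateRow k.castSucc
      (Pi.single k.succ 1)).det with hc2
  have key : ∀ t : ℝ,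
      (jacobiL M (x + t • (Pi.single (Sum.inl k) 1 : (Fin M ⊕ Fin (M+1)) → ℝ))).det
        = A.det + t * (2 * A.adjugate k.castSucc k.succ) + t * t * c2 := by
    intro t
    rw [jacobiL_add_inl]
    set B := A.updateRow k.castSucc (A k.castSucc + t • (Pi.single k.succ 1 : Fin (M+1) → ℝ))
      with hB
    have hBrow : B k.succ = A k.succ := Matrix.updateRow_ne hne.symm
    have h1 : (B.updateRow k.succ
        (A k.succ + t • (Pi.single k.castSucc 1 : Fin (M+1) → ℝ))).det
        = B.det + t * (B.updateRow k.succ (Pi.single k.castSucc 1)).det := by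
      rw [Matrix.det_updateRow_add, Matrix.det_updateRow_smul, ← hBrow,
        Matrix.updateRow_eq_self]
    have h2 : B.det = A.det + t * A.adjugate k.succ k.castSucc := by
      rw [hB, Matrix.det_updateRow_add, Matrix.updateRow_eq_self, Matrix.det_updateRow_smul,
        ← Matrix.adjugate_apply]
    have h3 : (B.updateRow k.succ (Pi.single k.castSucc 1)).det
        = A.adjugate k.castSucc k.succ + t * c2 := by
      rw [hB, _root_.updateRow_comm A hne, Matrix.det_updateRow_add, Matrix.det_updateRow_smul,
        show A k.castSucc
            = (A.updateRow k.succ (Pi.single k.castSucc 1)) k.castSucc from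
            (Matrix.updateRow_ne hne).symm, Matrix.updateRow_eq_self, ← Matrix.adjugate_apply,
        ← hc2]
    rw [h1, h2, h3]
    rw [jacobiL_adj_symm M x k.succ k.castSucc]
    ring
  simp only [key]
  have hd : HasDerivAt
      (fun t : ℝ => A.det + t * (2 * A.adjugate k.castSucc k.succ) + t * t * c2)
      (2 * A.adjugate k.castSucc k.succ) 0 := by
    have h := (((hasDerivAt_id (0:ℝ)).mul_const
        (2 * A.adjugate k.castSucc k.succ)).const_add A.det).add
      (((hasDerivAt_id (0:ℝ)).mul (hasDerivAt_id (0:ℝ))).mul_const c2)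
    simpa [Pi.add_def] using h
  exact hd

lemma jacobiL_diag (M : ℕ) (x : (Fin M ⊕ Fin (M+1)) → ℝ) (p : Fin (M+1)) :
    jacobiL M x p p = x (Sum.inr p) := by simp [jacobiL]

lemma jacobiL_sub (M : ℕ) (x : (Fin M ⊕ Fin (M+1)) → ℝ) (p : Fin (M+1))
    (h : 1 ≤ (p:ℕ)) :
    jacobiL M x p ⟨(p:ℕ)-1, by have := p.isLt; omega⟩
      = x (Sum.inl ⟨(p:ℕ)-1, by have := p.isLt; omega⟩) := by
  simp only [jacobiL]
  rw [if_neg (by simp [Fin.ext_iff]; omega), dif_neg (by omega), dif_pos (by omega)]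

lemma jacobiL_super (M : ℕ) (x : (Fin M ⊕ Fin (M+1)) → ℝ) (p : Fin (M+1))
    (h : (p:ℕ) < M) :
    jacobiL M x p ⟨(p:ℕ)+1, by omega⟩ = x (Sum.inl ⟨(p:ℕ), h⟩) := by
  simp only [jacobiL]
  rw [if_neg (by simp [Fin.ext_iff]), dif_pos (by simp)]

lemma jacobiL_far (M : ℕ) (x : (Fin M ⊕ Fin (M+1)) → ℝ) (p r : Fin (M+1))
    (h1 : (r:ℕ) + 1 ≠ (p:ℕ)) (h2 : (r:ℕ) ≠ (p:ℕ)) (h3 : (r:ℕ) ≠ (p:ℕ)+1) :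
    jacobiL M x p r = 0 := by
  simp only [jacobiL]
  rw [if_neg (by simp [Fin.ext_iff]; omega), dif_neg (by omega), dif_neg (by omega)]

lemma rowdot (M : ℕ) (x : (Fin M ⊕ Fin (M+1)) → ℝ) (p q : Fin (M+1)) :
    (if h : 1 ≤ (p:ℕ) then
        x (Sum.inl ⟨(p:ℕ)-1, by have := p.isLt; omega⟩) *
          (jacobiL M x).adjugate ⟨(p:ℕ)-1, by have := p.isLt; omega⟩ q
      else 0)
    + x (Sum.inr p) * (jacobiL M x).adjugate p q
    + (if h : (p:ℕ) < M then
        x (Sum.inl ⟨(p:ℕ), h⟩) * (jacobiL M x).adjugate ⟨(p:ℕ)+1, by omega⟩ q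
      else 0)
    = if p = q then (jacobiL M x).det else 0 := by
  have h0 : ∑ r, jacobiL M x p r * (jacobiL M x).adjugate r q
      = if p = q then (jacobiL M x).det else 0 := by
    have hm := congrFun (congrFun (Matrix.mul_adjugate (jacobiL M x)) p) q
    simpa [Matrix.mul_apply, Matrix.smul_apply, Matrix.one_apply, mul_ite] using hm
  rw [← h0]
  have hsplit : ∀ r : Fin (M+1), jacobiL M x p r * (jacobiL M x).adjugate r q
      = (if (r:ℕ) + 1 = (p:ℕ) then jacobiL M x p r * (jacobiL M x).adjugate r q else 0)
        + (if (r:ℕ) = (p:ℕ) then jacobiL M x p r * (jacobiL M x).adjugate r q else 0)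
        + (if (r:ℕ) = (p:ℕ)+1 then jacobiL M x p r * (jacobiL M x).adjugate r q else 0) := by
    intro r
    by_cases c1 : (r:ℕ) + 1 = (p:ℕ)
    · rw [if_pos c1, if_neg (by omega), if_neg (by omega)]; ring
    · by_cases c2 : (r:ℕ) = (p:ℕ)
      · rw [if_neg c1, if_pos c2, if_neg (by omega)]; ring
      · by_cases c3 : (r:ℕ) = (p:ℕ)+1
        · rw [if_neg c1, if_neg c2, if_pos c3]; ring
        · rw [if_neg c1, if_neg c2, if_neg c3, jacobiL_far M x p r c1 c2 c3, zero_mul]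
          ring
  rw [Finset.sum_congr rfl (fun r _ => hsplit r), Finset.sum_add_distrib,
    Finset.sum_add_distrib]
  congr 1
  · congr 1
    -- S1
    · rw [sum_succ_support _ (fun k hk => if_neg hk)]
      by_cases h1 : 1 ≤ (p:ℕ)
      · rw [dif_pos (by have := p.isLt; omega : 0 < (p:ℕ) ∧ (p:ℕ)-1 < M+1),
          dif_pos h1, if_pos (by simp; omega), jacobiL_sub M x p h1]
      · rw [dif_neg h1, dif_neg (show ¬(0 < (p:ℕ) ∧ (p:ℕ)-1 < M+1) from by omega)]
    -- S2
    · rw [sum_single_support _ (fun k hk => if_neg hk), dif_pos p.isLt,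
        if_pos (by simp)]
      simp only [Fin.eta, jacobiL_diag]
  · -- S3
    rw [sum_single_support _ (fun k hk => if_neg hk)]
    by_cases h2 : (p:ℕ) < M
    · rw [dif_pos (by omega : (p:ℕ)+1 < M+1), dif_pos h2, if_pos (by simp),
        jacobiL_super M x p h2]
    · rw [dif_neg h2, dif_neg (show ¬((p:ℕ)+1 < M+1) from by omega)]

lemma casimir_key (M : ℕ) (x : (Fin M ⊕ Fin (M+1)) → ℝ) (j : Fin M ⊕ Fin (M+1)) :
    ∑ i, pi2 M i j x * pd i (fun y => (jacobiL M y).det) x = 0 := by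
  rw [Fintype.sum_sum_type]
  cases j with
  | inr m =>
    have S1 : (∑ k : Fin M,
        pi2 M (Sum.inl k) (Sum.inr m) x * pd (Sum.inl k) (fun y => (jacobiL M y).det) x)
        = (if h : (m:ℕ) < M then
            -(x (Sum.inl ⟨(m:ℕ), h⟩) * x (Sum.inr m)) *
              (2 * (jacobiL M x).adjugate ⟨(m:ℕ), by omega⟩ ⟨(m:ℕ)+1, by omega⟩)
          else 0)
        + (if h : 0 < (m:ℕ) ∧ (m:ℕ)-1 < M then
            (x (Sum.inl ⟨(m:ℕ)-1, h.2⟩) * x (Sum.inr m)) *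
              (2 * (jacobiL M x).adjugate ⟨(m:ℕ)-1, by omega⟩ ⟨(m:ℕ), by omega⟩)
          else 0) := by
      simp only [pd_detL_inl, pi2, Fin.ext_iff, Fin.coe_castSucc, Fin.val_succ]
      have split : ∀ k : Fin M,
          (if (m:ℕ) = (k:ℕ) then -(x (Sum.inl k) * x (Sum.inr m))
            else if (m:ℕ) = (k:ℕ)+1 then x (Sum.inl k) * x (Sum.inr m) else 0) *
            (2 * (jacobiL M x).adjugate k.castSucc k.succ)
          = (if (k:ℕ) = (m:ℕ) then -(x (Sum.inl k) * x (Sum.inr m)) *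
              (2 * (jacobiL M x).adjugate k.castSucc k.succ) else 0)
            + (if (k:ℕ)+1 = (m:ℕ) then (x (Sum.inl k) * x (Sum.inr m)) *
              (2 * (jacobiL M x).adjugate k.castSucc k.succ) else 0) := by
        intro k
        by_cases c1 : (m:ℕ) = (k:ℕ)
        · rw [if_pos c1, if_pos (by omega), if_neg (by omega)]; ring
        · by_cases c2 : (m:ℕ) = (k:ℕ)+1
          · rw [if_neg c1, if_pos c2, if_neg (by omega), if_pos (by omega)]; ring
          · rw [if_neg c1, if_neg c2, if_neg (by omega), if_neg (by omega)]; ring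
      rw [Finset.sum_congr rfl (fun k _ => split k), Finset.sum_add_distrib,
        sum_single_support (c := (m:ℕ)) _ (fun k hk => if_neg hk),
        sum_succ_support (c := (m:ℕ)) _ (fun k hk => if_neg hk)]
      congr 1
      · split_ifs with h hc
        · simp only [Fin.castSucc_mk, Fin.succ_mk, Fin.eta, Fin.val_mk]
        · exact (hc (by simp)).elim
        · rfl
      · split_ifs with h hc
        · simp only [Fin.castSucc_mk, Fin.succ_mk, Fin.val_mk,
            show (m:ℕ)-1+1 = (m:ℕ) from by omega]
        · exact (hc (by simp; omega)).elim
        · rfl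
    have S2 : (∑ k : Fin (M+1),
        pi2 M (Sum.inr k) (Sum.inr m) x * pd (Sum.inr k) (fun y => (jacobiL M y).det) x)
        = (if h : 0 < (m:ℕ) ∧ (m:ℕ)-1 < M+1 then
            (2 * (x (Sum.inl ⟨(m:ℕ)-1, by have := m.isLt; omega⟩))^2) *
              (jacobiL M x).adjugate ⟨(m:ℕ)-1, by omega⟩ ⟨(m:ℕ)-1, by omega⟩
          else 0)
        + (if h : (m:ℕ)+1 < M+1 then
            (-(2 * (x (Sum.inl ⟨(m:ℕ), by omega⟩))^2)) *
              (jacobiL M x).adjugate ⟨(m:ℕ)+1, by omega⟩ ⟨(m:ℕ)+1, by omega⟩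
          else 0) := by
      simp only [pd_detL_inr, pi2]
      have split : ∀ k : Fin (M+1),
          (if h : (k:ℕ)+1 = (m:ℕ) then 2 * (x (Sum.inl ⟨(k:ℕ), by have := m.isLt; omega⟩))^2
            else if h : (m:ℕ)+1 = (k:ℕ) then
              -(2 * (x (Sum.inl ⟨(m:ℕ), by have := k.isLt; omega⟩))^2)
            else 0) * (jacobiL M x).adjugate k k
          = (if h : (k:ℕ)+1 = (m:ℕ) then
              (2 * (x (Sum.inl ⟨(k:ℕ), by have := m.isLt; omega⟩))^2) *
                (jacobiL M x).adjugate k k else 0)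
            + (if h : (m:ℕ)+1 = (k:ℕ) then
              (-(2 * (x (Sum.inl ⟨(m:ℕ), by have := k.isLt; omega⟩))^2)) *
                (jacobiL M x).adjugate k k else 0) := by
        intro k
        by_cases c1 : (k:ℕ)+1 = (m:ℕ)
        · rw [dif_pos c1, dif_pos c1, dif_neg (by omega)]; ring
        · by_cases c2 : (m:ℕ)+1 = (k:ℕ)
          · rw [dif_neg c1, dif_neg c1, dif_pos c2, dif_pos c2]; ring
          · rw [dif_neg c1, dif_neg c1, dif_neg c2, dif_neg c2]; ring
      rw [Finset.sum_congr rfl (fun k _ => split k), Finset.sum_add_distrib,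
        sum_succ_support (c := (m:ℕ)) _ (fun k hk => dif_neg hk),
        sum_single_support (c := (m:ℕ)+1) _ (fun k hk => dif_neg (by omega))]
      congr 1
      · split_ifs with h hc
        · simp only [Fin.val_mk]
        · exact (hc (by simp; omega)).elim
        · rfl
      · split_ifs with h hc
        · simp only [Fin.val_mk]
        · exact (hc (by simp)).elim
        · rfl
    rw [S1, S2]
    by_cases h1 : 0 < (m:ℕ)
    · by_cases h2 : (m:ℕ) < M
      · rw [dif_pos h2, dif_pos ⟨h1, by omega⟩, dif_pos (⟨h1, by omega⟩ : 0 < (m:ℕ) ∧ (m:ℕ)-1 < M+1),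
          dif_pos (show (m:ℕ)+1 < M+1 by omega)]
        have R1 := rowdot M x m ⟨(m:ℕ)-1, by omega⟩
        have R2 := rowdot M x m ⟨(m:ℕ)+1, by omega⟩
        rw [dif_pos (show 1 ≤ (m:ℕ) from h1), dif_pos h2, if_neg (by simp only [Fin.ext_iff, Fin.val_mk]; omega)] at R1
        rw [dif_pos (show 1 ≤ (m:ℕ) from h1), dif_pos h2, if_neg (by simp only [Fin.ext_iff, Fin.val_mk]; omega)] at R2
        have hsA := jacobiL_adj_symm M x m ⟨(m:ℕ)-1, by omega⟩
        have hsB := jacobiL_adj_symm M x (⟨(m:ℕ)-1, by omega⟩ : Fin (M+1))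
          (⟨(m:ℕ)+1, by omega⟩ : Fin (M+1))
        simp only [Fin.eta]
        linear_combination (2 * x (Sum.inl ⟨(m:ℕ)-1, by omega⟩)) * R1
          - (2 * x (Sum.inl ⟨(m:ℕ), h2⟩)) * R2
          + (2 * x (Sum.inr m) * x (Sum.inl ⟨(m:ℕ)-1, by omega⟩)) * hsA
          - (2 * x (Sum.inl ⟨(m:ℕ)-1, by omega⟩) * x (Sum.inl ⟨(m:ℕ), h2⟩)) * hsB
      · rw [dif_neg h2, dif_pos ⟨h1, by omega⟩, dif_pos (⟨h1, by omega⟩ : 0 < (m:ℕ) ∧ (m:ℕ)-1 < M+1),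
          dif_neg (show ¬((m:ℕ)+1 < M+1) by omega)]
        have R1 := rowdot M x m ⟨(m:ℕ)-1, by omega⟩
        rw [dif_pos (show 1 ≤ (m:ℕ) from h1), dif_neg h2, if_neg (by simp only [Fin.ext_iff, Fin.val_mk]; omega)] at R1
        have hsA := jacobiL_adj_symm M x m ⟨(m:ℕ)-1, by omega⟩
        simp only [Fin.eta]
        linear_combination (2 * x (Sum.inl ⟨(m:ℕ)-1, by omega⟩)) * R1
          + (2 * x (Sum.inr m) * x (Sum.inl ⟨(m:ℕ)-1, by omega⟩)) * hsA
    · by_cases h2 : (m:ℕ) < M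
      · rw [dif_pos h2, dif_neg (show ¬(0 < (m:ℕ) ∧ (m:ℕ)-1 < M) by omega),
          dif_neg (show ¬(0 < (m:ℕ) ∧ (m:ℕ)-1 < M+1) by omega),
          dif_pos (show (m:ℕ)+1 < M+1 by omega)]
        have R2 := rowdot M x m ⟨(m:ℕ)+1, by omega⟩
        rw [dif_neg (show ¬(1 ≤ (m:ℕ)) by omega), dif_pos h2, if_neg (by simp only [Fin.ext_iff, Fin.val_mk]; omega)] at R2
        simp only [Fin.eta]
        linear_combination (- 2 * x (Sum.inl ⟨(m:ℕ), h2⟩)) * R2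
      · rw [dif_neg h2, dif_neg (show ¬(0 < (m:ℕ) ∧ (m:ℕ)-1 < M) by omega),
          dif_neg (show ¬(0 < (m:ℕ) ∧ (m:ℕ)-1 < M+1) by omega),
          dif_neg (show ¬((m:ℕ)+1 < M+1) by omega)]
        ring
  | inl m =>
    have S1 : (∑ k : Fin M,
        pi2 M (Sum.inl k) (Sum.inl m) x * pd (Sum.inl k) (fun y => (jacobiL M y).det) x)
        = (if h : 0 < (m:ℕ) ∧ (m:ℕ)-1 < M then
            (1/2 * x (Sum.inl ⟨(m:ℕ)-1, h.2⟩) * x (Sum.inl m)) *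
              (2 * (jacobiL M x).adjugate ⟨(m:ℕ)-1, by omega⟩ ⟨(m:ℕ), by omega⟩)
          else 0)
        + (if h : (m:ℕ)+1 < M then
            (-(1/2 * x (Sum.inl m) * x (Sum.inl ⟨(m:ℕ)+1, h⟩))) *
              (2 * (jacobiL M x).adjugate ⟨(m:ℕ)+1, by omega⟩ ⟨(m:ℕ)+2, by omega⟩)
          else 0) := by
      simp only [pd_detL_inl, pi2]
      have split : ∀ k : Fin M,
          (if (k:ℕ)+1 = (m:ℕ) then 1/2 * x (Sum.inl k) * x (Sum.inl m)
            else if (m:ℕ)+1 = (k:ℕ) then -(1/2 * x (Sum.inl m) * x (Sum.inl k)) else 0) *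
            (2 * (jacobiL M x).adjugate k.castSucc k.succ)
          = (if (k:ℕ)+1 = (m:ℕ) then (1/2 * x (Sum.inl k) * x (Sum.inl m)) *
              (2 * (jacobiL M x).adjugate k.castSucc k.succ) else 0)
            + (if (m:ℕ)+1 = (k:ℕ) then (-(1/2 * x (Sum.inl m) * x (Sum.inl k))) *
              (2 * (jacobiL M x).adjugate k.castSucc k.succ) else 0) := by
        intro k
        by_cases c1 : (k:ℕ)+1 = (m:ℕ)
        · rw [if_pos c1, if_pos c1, if_neg (by omega)]; ring
        · by_cases c2 : (m:ℕ)+1 = (k:ℕ)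
          · rw [if_neg c1, if_neg c1, if_pos c2, if_pos c2]; ring
          · rw [if_neg c1, if_neg c1, if_neg c2, if_neg c2]; ring
      rw [Finset.sum_congr rfl (fun k _ => split k), Finset.sum_add_distrib,
        sum_succ_support (c := (m:ℕ)) _ (fun k hk => if_neg hk),
        sum_single_support (c := (m:ℕ)+1) _ (fun k hk => if_neg (by omega))]
      congr 1
      · split_ifs with h hc
        · simp only [Fin.castSucc_mk, Fin.succ_mk, Fin.val_mk,
            show (m:ℕ)-1+1 = (m:ℕ) from by omega]
        · exact (hc (by simp; omega)).elim
        · rfl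
      · split_ifs with h hc
        · simp only [Fin.castSucc_mk, Fin.succ_mk, Fin.val_mk]
        · exact (hc (by simp)).elim
        · rfl
    have S2 : (∑ k : Fin (M+1),
        pi2 M (Sum.inr k) (Sum.inl m) x * pd (Sum.inr k) (fun y => (jacobiL M y).det) x)
        = (x (Sum.inl m) * x (Sum.inr ⟨(m:ℕ), by omega⟩)) *
            (jacobiL M x).adjugate ⟨(m:ℕ), by omega⟩ ⟨(m:ℕ), by omega⟩
          + (-(x (Sum.inl m) * x (Sum.inr ⟨(m:ℕ)+1, by omega⟩))) *
            (jacobiL M x).adjugate ⟨(m:ℕ)+1, by omega⟩ ⟨(m:ℕ)+1, by omega⟩ := by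
      simp only [pd_detL_inr, pi2, Fin.ext_iff, Fin.coe_castSucc, Fin.val_succ]
      have split : ∀ k : Fin (M+1),
          (if (k:ℕ) = (m:ℕ) then x (Sum.inl m) * x (Sum.inr k)
            else if (k:ℕ) = (m:ℕ)+1 then -(x (Sum.inl m) * x (Sum.inr k)) else 0) *
            (jacobiL M x).adjugate k k
          = (if (k:ℕ) = (m:ℕ) then (x (Sum.inl m) * x (Sum.inr k)) *
              (jacobiL M x).adjugate k k else 0)
            + (if (k:ℕ) = (m:ℕ)+1 then (-(x (Sum.inl m) * x (Sum.inr k))) *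
              (jacobiL M x).adjugate k k else 0) := by
        intro k
        by_cases c1 : (k:ℕ) = (m:ℕ)
        · rw [if_pos c1, if_pos c1, if_neg (by omega)]; ring
        · by_cases c2 : (k:ℕ) = (m:ℕ)+1
          · rw [if_neg c1, if_neg c1, if_pos c2, if_pos c2]; ring
          · rw [if_neg c1, if_neg c1, if_neg c2, if_neg c2]; ring
      rw [Finset.sum_congr rfl (fun k _ => split k), Finset.sum_add_distrib,
        sum_single_support (c := (m:ℕ)) _ (fun k hk => if_neg hk),
        sum_single_support (c := (m:ℕ)+1) _ (fun k hk => if_neg hk),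
        dif_pos (show (m:ℕ) < M+1 by omega), dif_pos (show (m:ℕ)+1 < M+1 by omega),
        if_pos (by simp), if_pos (by simp)]
    rw [S1, S2]
    have hsC := jacobiL_adj_symm M x (⟨(m:ℕ), by omega⟩ : Fin (M+1))
      (⟨(m:ℕ)+1, by omega⟩ : Fin (M+1))
    have RA := rowdot M x ⟨(m:ℕ), by omega⟩ ⟨(m:ℕ), by omega⟩
    have RB := rowdot M x ⟨(m:ℕ)+1, by omega⟩ ⟨(m:ℕ)+1, by omega⟩
    rw [if_pos rfl] at RA RB
    simp only [Fin.val_mk, Fin.eta, show (m:ℕ)+1-1 = (m:ℕ) from by omega] at RA RB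
    rw [dif_pos m.isLt] at RA
    rw [dif_pos (show 1 ≤ (m:ℕ)+1 by omega)] at RB
    by_cases h1 : 0 < (m:ℕ)
    · rw [dif_pos (⟨h1, by omega⟩ : 0 < (m:ℕ) ∧ (m:ℕ)-1 < M)]
      rw [dif_pos (show 1 ≤ (m:ℕ) from h1)] at RA
      by_cases h2 : (m:ℕ)+1 < M
      · rw [dif_pos h2]
        rw [dif_pos h2] at RB
        have hsD := jacobiL_adj_symm M x (⟨(m:ℕ)+1, by omega⟩ : Fin (M+1))
          (⟨(m:ℕ)+2, by omega⟩ : Fin (M+1))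
        simp only [show (m:ℕ)+1+1 = (m:ℕ)+2 from rfl] at RB
        linear_combination x (Sum.inl m) * RA - x (Sum.inl m) * RB
          - (x (Sum.inl m))^2 * hsC + (x (Sum.inl m) * x (Sum.inl ⟨(m:ℕ)+1, h2⟩)) * hsD
      · rw [dif_neg h2]
        rw [dif_neg h2] at RB
        linear_combination x (Sum.inl m) * RA - x (Sum.inl m) * RB
          - (x (Sum.inl m))^2 * hsC
    · rw [dif_neg (show ¬(0 < (m:ℕ) ∧ (m:ℕ)-1 < M) by omega)]
      rw [dif_neg (show ¬(1 ≤ (m:ℕ)) by omega)] at RA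
      by_cases h2 : (m:ℕ)+1 < M
      · rw [dif_pos h2]
        rw [dif_pos h2] at RB
        have hsD := jacobiL_adj_symm M x (⟨(m:ℕ)+1, by omega⟩ : Fin (M+1))
          (⟨(m:ℕ)+2, by omega⟩ : Fin (M+1))
        simp only [show (m:ℕ)+1+1 = (m:ℕ)+2 from rfl] at RB
        linear_combination x (Sum.inl m) * RA - x (Sum.inl m) * RB
          - (x (Sum.inl m))^2 * hsC + (x (Sum.inl m) * x (Sum.inl ⟨(m:ℕ)+1, h2⟩)) * hsD
      · rw [dif_neg h2]
        rw [dif_neg h2] at RB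
        linear_combination x (Sum.inl m) * RA - x (Sum.inl m) * RB
          - (x (Sum.inl m))^2 * hsC

/-- det L is a Casimir of the quadratic Toda bracket π₂:
{det L, f}_{π₂} = 0 for every smooth f. -/
theorem detL_casimir_pi2 (M : ℕ) (f : ((Fin M ⊕ Fin (M+1)) → ℝ) → ℝ)
    (hf : ContDiff ℝ (⊤ : ℕ∞) f) (x : (Fin M ⊕ Fin (M+1)) → ℝ) :
    pbracket (pi2 M) (fun y => (jacobiL M y).det) f x = 0 := by
  unfold pbracket
  rw [Finset.sum_comm]
  apply Finset.sum_eq_zero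
  intro j _
  rw [← Finset.sum_mul, casimir_key M x j, zero_mul]
end

section
/- The modular vector field of π₁ is Hamiltonian: D(π₁) equals the Hamiltonian vector field of f = ln(a₁a₂⋯a_{N-1}) with respect to π₁, on the open set where all a_i > 0. -/
/-- The modular vector field (divergence) of a 2-tensor `π` with respect to
the standard volume: D(π)_j = Σ_i ∂π_{ji}/∂x_i. -/
noncomputable def modvf {ι : Type*} [Fintype ι] [DecidableEq ι]
    (π : ι → ι → (ι → ℝ) → ℝ) (x : ι → ℝ) (j : ι) : ℝ :=
  ∑ i, pd i (fun y => π j i y) x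

/-! π₁ is linear, so `∂ᵢ π_{ji}(x) = π_{ji}(eᵢ)`. An entry `π_{j,aᵢ}` is a constant multiple of
`aᵢ`, while `π_{j,bᵢ}` depends on the `a`-coordinates only and so vanishes at `e_{bᵢ}`. Since
`∂f/∂aᵢ = 1/aᵢ` and `∂f/∂bᵢ = 0`, the divergence and the Hamiltonian field agree term by term. -/

open scoped Topology

theorem pd_of_isLinearMap {ι : Type*} [Fintype ι] [DecidableEq ι] {f : (ι → ℝ) → ℝ}
    (hf : IsLinearMap ℝ f) (i : ι) (x : ι → ℝ) : pd i f x = f (Pi.single i 1) := by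
  rw [pd, show f = LinearMap.toContinuousLinearMap (hf.mk' f) from rfl,
    ContinuousLinearMap.fderiv]

section LogProd

variable {α β : Type*} [Fintype α] [Fintype β]

theorem hasFDerivAt_log_prod_inl {x : α ⊕ β → ℝ} (hx : ∀ k, x (.inl k) ≠ 0) :
    HasFDerivAt (fun y : α ⊕ β → ℝ => Real.log (∏ k, y (.inl k)))
      (∑ k, (x (.inl k))⁻¹ • ContinuousLinearMap.proj (R := ℝ) (φ := fun _ => ℝ) (.inl k)) x := by
  -- near `x` the logarithm of the product is the sum of the logarithms
  have hnear : ∀ᶠ y in 𝓝 x, ∀ k, y (.inl k) ≠ 0 :=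
    Filter.eventually_all.2 fun k => (continuous_apply _).continuousAt.eventually_ne (hx k)
  refine (HasFDerivAt.fun_sum fun k _ => ?_).congr_of_eventuallyEq
    (hnear.mono fun y hy => Real.log_prod fun k _ => hy k)
  exact (ContinuousLinearMap.proj (R := ℝ) (φ := fun _ => ℝ) (Sum.inl k : α ⊕ β)).hasFDerivAt.log
    (hx k)

theorem pd_log_prod_inl [DecidableEq α] [DecidableEq β] {x : α ⊕ β → ℝ}
    (hx : ∀ k, x (.inl k) ≠ 0) (i : α ⊕ β) :
    pd i (fun y => Real.log (∏ k, y (.inl k))) x = Sum.elim (fun k => (x (.inl k))⁻¹) 0 i := by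
  rw [pd, (hasFDerivAt_log_prod_inl hx).fderiv]
  cases i <;> simp [Pi.single_apply]

end LogProd

theorem isLinearMap_pi1 (M : ℕ) (j i : Fin M ⊕ Fin (M+1)) : IsLinearMap ℝ (pi1 M j i) := by
  constructor <;> intros <;> rcases j with j | j <;> rcases i with i | i <;>
    simp only [pi1] <;> (try split_ifs) <;> simp <;> ring

theorem pi1_apply_single (M : ℕ) {x : (Fin M ⊕ Fin (M+1)) → ℝ} (hx : ∀ k, x (.inl k) ≠ 0)
    (j i : Fin M ⊕ Fin (M+1)) :
    pi1 M j i (Pi.single i 1) = pi1 M j i x * Sum.elim (fun k => (x (.inl k))⁻¹) 0 i := by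
  rcases j with j | j <;> rcases i with i | i <;> simp only [pi1] <;> (try split_ifs) <;>
    simp [hx]

/-- The modular vector field of π₁ is Hamiltonian: on the open set where all
a_i > 0, D(π₁) equals the Hamiltonian vector field (X_f)_j = Σ_i (π₁)_{ji} ∂f/∂x_i
of f = ln(a₁ a₂ ⋯ a_{N-1}) with respect to π₁. -/
theorem modular_pi1_hamiltonian (M : ℕ) (x : (Fin M ⊕ Fin (M+1)) → ℝ)
    (hx : ∀ i : Fin M, 0 < x (.inl i)) (j : Fin M ⊕ Fin (M+1)) :
    modvf (pi1 M) x j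
      = ∑ i, pi1 M j i x * pd i (fun y => Real.log (∏ k : Fin M, y (.inl k))) x := by
  have hx₀ : ∀ k, x (.inl k) ≠ 0 := fun k => (hx k).ne'
  refine Finset.sum_congr rfl fun i _ => ?_
  rw [pd_of_isLinearMap (isLinearMap_pi1 M j i), pd_log_prod_inl hx₀, pi1_apply_single M hx₀]
end

section
/- In (q,p)-coordinates on ℝ^{2N}, the modular vector field of the second Toda Poisson tensor Ĵ₂ with respect to the standard volume is Y = −Σ_{i=1}^N ∂/∂q_i, i.e., its components are (−1,…,−1,0,…,0). -/
/-- The second Toda Poisson tensor Ĵ₂ in (q,p)-coordinates on ℝ^{2N}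
(q = `Sum.inl`, p = `Sum.inr`), in block form [[A, B], [-B, C]] with
A_{ij} = 1 for i < j, B = diag(-p₁,…,-p_N), C_{i,i+1} = e^{q_i - q_{i+1}}. -/
noncomputable def J2hat (N : ℕ) :
    (Fin N ⊕ Fin N) → (Fin N ⊕ Fin N) → ((Fin N ⊕ Fin N) → ℝ) → ℝ
  | .inl i, .inl j => fun _ => if i < j then 1 else if j < i then -1 else 0
  | .inl i, .inr j => fun x => if i = j then -(x (.inr i)) else 0
  | .inr i, .inl j => fun x => if i = j then x (.inr i) else 0
  | .inr i, .inr j => fun x =>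
      if (i : ℕ) + 1 = (j : ℕ) then Real.exp (x (.inl i) - x (.inl j))
      else if (j : ℕ) + 1 = (i : ℕ) then -Real.exp (x (.inl j) - x (.inl i))
      else 0

/-!
Each entry of Ĵ₂ in row `j`, column `k` either does not depend on the coordinate `x_k` or
is `-p_a` in position `(q_a, p_a)`. So only the entries `-p_a` contribute to the divergence,
giving `-1` in each `q`-component and `0` in each `p`-component.
-/

section PartialDeriv

variable {ι : Type*} [Fintype ι] [DecidableEq ι]

lemma pd_eq_zero_of_update_eq {i : ι} {f : (ι → ℝ) → ℝ}
    (hf : ∀ y t, f (Function.update y i t) = f y) (x : ι → ℝ) : pd i f x = 0 := by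
  by_cases hdiff : DifferentiableAt ℝ f x
  · have hline : (fun t : ℝ => f (x + t • Pi.single i 1)) = fun _ => f x := by
      funext t
      rw [← hf x (x i + t)]
      congr 1
      ext k
      rcases eq_or_ne k i with rfl | hk <;> simp [Function.update_of_ne, *]
    rw [pd, ← hdiff.lineDeriv_eq_fderiv, lineDeriv, hline, deriv_const]
  · simp [pd, fderiv_zero_of_not_differentiableAt hdiff]

lemma pd_neg_apply_self (i : ι) (x : ι → ℝ) : pd i (fun y => -y i) x = -1 := by
  have hlin : HasFDerivAt (fun y : ι → ℝ => -y i)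
      (-ContinuousLinearMap.proj (R := ℝ) (φ := fun _ : ι => ℝ) i) x :=
    (hasFDerivAt_apply i x).neg
  simp [pd, hlin.fderiv]

end PartialDeriv

/-- The modular vector field of Ĵ₂ with respect to the standard volume on ℝ^{2N}
is -Σ_{i=1}^N ∂/∂q_i, with components (-1,…,-1,0,…,0). -/
theorem modular_J2hat (N : ℕ) (x : (Fin N ⊕ Fin N) → ℝ) (j : Fin N ⊕ Fin N) :
    modvf (J2hat N) x j = Sum.elim (fun _ => (-1 : ℝ)) (fun _ => (0 : ℝ)) j := by
  rcases j with a | a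
  · rw [modvf, Finset.sum_eq_single (Sum.inr a)]
    · simpa [J2hat] using pd_neg_apply_self (Sum.inr a) x
    · rintro (i | i) - hne
      · exact pd_eq_zero_of_update_eq (fun _ _ => rfl) x
      · have hai : a ≠ i := fun h => hne (h ▸ rfl)
        exact pd_eq_zero_of_update_eq (fun _ _ => by simp [J2hat, hai]) x
    · simp
  · refine Finset.sum_eq_zero fun k _ => pd_eq_zero_of_update_eq (fun y t => ?_) x
    rcases k with i | i <;> simp [J2hat, Function.update_of_ne]
end
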